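/- arXiv:1603.01392 — 2 statements merged into one kernel-verified Lean document; each statement's English description precedes it below -/
import Mathlib

section
/- Let 0 < p < 1 and p < c < min{2p, 1}, and define w(p,c) = ((1−c)/(1−p))·((2p−c)(1−p)/(2p(c−p)) + 1/(2c)) (the mean waiting time in the region where the residual-queue term E(p,c) is positive, i.e. p < c < 2p). Then the second partial derivative of w with respect to p equals (1−c)·(1/(c−p)³ − 1/p³ + 1/(c(1−p)³)), and this quantity is strictly positive. -/
/-! On `(0, c)` the waiting time is the partial-fraction sum
`(1 - c)/2 · (1/(c - p) - 1/p) + (1 - c)/(2c) · 1/(1 - p)`, since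
`(2p - c)/(p (c - p)) = 1/(c - p) - 1/p`; differentiating termwise twice gives the formula.
It is positive because `c < 2p` means `c - p < p`, so `1/(c - p)^3 > 1/p^3`. -/

open Topology Set

section InversePowers

variable {𝕜 : Type*} [NontriviallyNormedField 𝕜]

theorem hasDerivAt_one_div_pow (n : ℕ) {x : 𝕜} (hx : x ≠ 0) :
    HasDerivAt (fun y => 1 / y ^ n) (-n / x ^ (n + 1)) x := by
  simp only [one_div]
  refine ((hasDerivAt_pow n x).inv (pow_ne_zero n hx)).congr_deriv ?_
  cases n with
  | zero => simp
  | succ n =>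
    rw [Nat.add_sub_cancel]
    field_simp
    ring

theorem hasDerivAt_one_div_sub_pow (n : ℕ) (a : 𝕜) {x : 𝕜} (hx : x ≠ a) :
    HasDerivAt (fun y => 1 / (a - y) ^ n) (n / (a - x) ^ (n + 1)) x := by
  have h := (hasDerivAt_one_div_pow n (sub_ne_zero.mpr hx.symm)).comp x
    ((hasDerivAt_const x a).sub (hasDerivAt_id x))
  rwa [zero_sub, mul_neg_one, neg_div, neg_neg] at h

end InversePowers

theorem waitingTime_eq_partialFractions {p c : ℝ} (hp0 : p ≠ 0) (hpc : p ≠ c) (hp1 : p ≠ 1) :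
    (1 - c) / (1 - p) * ((2 * p - c) * (1 - p) / (2 * p * (c - p)) + 1 / (2 * c))
      = (1 - c) / 2 * (1 / (c - p) - 1 / p) + (1 - c) / (2 * c) * (1 / (1 - p)) := by
  have : c - p ≠ 0 := sub_ne_zero.mpr hpc.symm
  have : 1 - p ≠ 0 := sub_ne_zero.mpr hp1.symm
  field_simp
  ring

theorem hasDerivAt_partialFractions (c : ℝ) {p : ℝ} (hp0 : p ≠ 0) (hpc : p ≠ c) (hp1 : p ≠ 1) :
    HasDerivAt (fun x => (1 - c) / 2 * (1 / (c - x) - 1 / x) + (1 - c) / (2 * c) * (1 / (1 - x)))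
      ((1 - c) / 2 * (1 / (c - p) ^ 2 + 1 / p ^ 2) + (1 - c) / (2 * c) * (1 / (1 - p) ^ 2)) p := by
  have hc : HasDerivAt (fun x => 1 / (c - x)) (1 / (c - p) ^ 2) p := by
    simpa using hasDerivAt_one_div_sub_pow 1 c hpc
  have h0 : HasDerivAt (fun x => 1 / x) (-1 / p ^ 2) p := by
    simpa using hasDerivAt_one_div_pow 1 hp0
  have h1 : HasDerivAt (fun x => 1 / (1 - x)) (1 / (1 - p) ^ 2) p := by
    simpa using hasDerivAt_one_div_sub_pow 1 1 hp1
  exact (((hc.sub h0).const_mul _).add (h1.const_mul _)).congr_deriv (by ring)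

theorem hasDerivAt_partialFractions_deriv (c : ℝ) {p : ℝ} (hp0 : p ≠ 0) (hpc : p ≠ c)
    (hp1 : p ≠ 1) :
    HasDerivAt
      (fun x => (1 - c) / 2 * (1 / (c - x) ^ 2 + 1 / x ^ 2) + (1 - c) / (2 * c) * (1 / (1 - x) ^ 2))
      ((1 - c) * (1 / (c - p) ^ 3 - 1 / p ^ 3 + 1 / (c * (1 - p) ^ 3))) p := by
  have h := (((hasDerivAt_one_div_sub_pow 2 c hpc).add (hasDerivAt_one_div_pow 2 hp0)).const_mul
    ((1 - c) / 2)).add ((hasDerivAt_one_div_sub_pow 2 1 hp1).const_mul ((1 - c) / (2 * c)))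
  refine h.congr_deriv ?_
  simp only [one_div, mul_inv]
  push_cast
  ring

theorem waitingTime_second_deriv_pos {p c : ℝ} (hp0 : 0 < p) (hpc : p < c) (hc2p : c < 2 * p)
    (hc1 : c < 1) :
    0 < (1 - c) * (1 / (c - p) ^ 3 - 1 / p ^ 3 + 1 / (c * (1 - p) ^ 3)) := by
  have hcube : 1 / p ^ 3 < 1 / (c - p) ^ 3 := by
    gcongr
    linarith
  have : 0 < 1 / (c * (1 - p) ^ 3) := by
    have : 0 < c := hp0.trans hpc
    have : 0 < 1 - p := by linarith
    positivity
  exact mul_pos (by linarith) (by linarith)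

theorem stmt_3_general (p c : ℝ) (hp0 : 0 < p) (hc0 : p < c)
    (hc1 : c < min (2 * p) 1) :
    deriv (fun p' : ℝ => deriv (fun p'' : ℝ =>
        ((1 - c) / (1 - p'')) * ((2 * p'' - c) * (1 - p'') / (2 * p'' * (c - p''))
          + 1 / (2 * c))) p') p
      = (1 - c) * (1 / (c - p) ^ 3 - 1 / p ^ 3 + 1 / (c * (1 - p) ^ 3)) ∧
    0 < (1 - c) * (1 / (c - p) ^ 3 - 1 / p ^ 3 + 1 / (c * (1 - p) ^ 3)) := by
  obtain ⟨hc2p, hc1⟩ := lt_min_iff.mp hc1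
  have hU : Ioo 0 c ∈ 𝓝 p := Ioo_mem_nhds hp0 hc0
  have hne : ∀ x ∈ Ioo 0 c, x ≠ 0 ∧ x ≠ c ∧ x ≠ 1 := fun x hx =>
    ⟨hx.1.ne', hx.2.ne, (hx.2.trans hc1).ne⟩
  have hderiv : deriv (fun x => (1 - c) / (1 - x) * ((2 * x - c) * (1 - x) / (2 * x * (c - x))
      + 1 / (2 * c))) =ᶠ[𝓝 p] fun x => (1 - c) / 2 * (1 / (c - x) ^ 2 + 1 / x ^ 2)
        + (1 - c) / (2 * c) * (1 / (1 - x) ^ 2) := by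
    filter_upwards [hU] with x hx
    obtain ⟨hx0, hxc, hx1⟩ := hne x hx
    rw [← (hasDerivAt_partialFractions c hx0 hxc hx1).deriv]
    refine Filter.EventuallyEq.deriv_eq ?_
    filter_upwards [Ioo_mem_nhds hx.1 hx.2] with y hy
    obtain ⟨hy0, hyc, hy1⟩ := hne y hy
    exact waitingTime_eq_partialFractions hy0 hyc hy1
  obtain ⟨hp0', hpc, hp1'⟩ := hne p ⟨hp0, hc0⟩
  exact ⟨hderiv.deriv_eq.trans (hasDerivAt_partialFractions_deriv c hp0' hpc hp1').deriv,
    waitingTime_second_deriv_pos hp0 hc0 hc2p hc1⟩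

/-- In the region `p < c < min{2p, 1}` (where the residual-queue term is
positive), the second partial derivative of the mean waiting time
`w(p,c) = ((1-c)/(1-p)) * ((2p-c)(1-p)/(2p(c-p)) + 1/(2c))` with respect to `p`
equals `(1-c)*(1/(c-p)^3 - 1/p^3 + 1/(c*(1-p)^3))`, which is strictly positive. -/
theorem stmt_3 (p c : ℝ) (hp0 : 0 < p) (hp1 : p < 1) (hc0 : p < c)
    (hc1 : c < min (2 * p) 1) :
    deriv (fun p' : ℝ => deriv (fun p'' : ℝ =>
        ((1 - c) / (1 - p'')) * ((2 * p'' - c) * (1 - p'') / (2 * p'' * (c - p''))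
          + 1 / (2 * c))) p') p
      = (1 - c) * (1 / (c - p) ^ 3 - 1 / p ^ 3 + 1 / (c * (1 - p) ^ 3)) ∧
    0 < (1 - c) * (1 / (c - p) ^ 3 - 1 / p ^ 3 + 1 / (c * (1 - p) ^ 3)) :=
  stmt_3_general p c hp0 hc0 hc1
end

section
/- Fix p with 0 < p < 1. The function c ↦ ((1−c)/(1−p))·((2p−c)(1−p)/(2p(c−p)) + 1/(2c)) is convex on the open interval (p, min{2p, 1}). -/
/-! Clearing denominators, the waiting time splits as
`(1-p)/2 · (c-p)⁻¹ + 1/(2(1-p)) · c⁻¹ + (affine function of c)`;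
both coefficients are nonnegative for `0 < p < 1`, and `x ↦ x⁻¹` is convex on `(0, ∞)`,
so the sum is convex on `(p, ∞)`, hence on the subinterval `(p, min {2p, 1})`. -/

open Set

lemma convexOn_inv_sub (a : ℝ) : ConvexOn ℝ (Ioi a) fun x : ℝ => (x - a)⁻¹ := by
  refine (((convexOn_zpow (-1)).translate_right (-a)).subset ?_ (convex_Ioi a)).congr ?_
  · intro x hx
    simp only [mem_preimage, mem_Ioi] at hx ⊢
    linarith
  · intro x _
    simp [sub_eq_neg_add]

lemma convexOn_inv_Ioi {a : ℝ} (ha : 0 ≤ a) : ConvexOn ℝ (Ioi a) fun x : ℝ => x⁻¹ := by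
  simpa using (convexOn_inv_sub 0).subset (Ioi_subset_Ioi ha) (convex_Ioi a)

lemma meanWaitingTime_eq_partialFractions {p c : ℝ} (hp0 : p ≠ 0) (hp1 : p ≠ 1)
    (hc0 : c ≠ 0) (hcp : c ≠ p) :
    ((1 - c) / (1 - p)) * ((2 * p - c) * (1 - p) / (2 * p * (c - p)) + 1 / (2 * c)) =
      (1 - p) / 2 * (c - p)⁻¹ + 1 / (2 * (1 - p)) * c⁻¹ +
        (c / (2 * p) - ((p + 1) / (2 * p) + 1 / (2 * (1 - p)))) := by
  have : c - p ≠ 0 := sub_ne_zero.mpr hcp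
  have : 1 - p ≠ 0 := sub_ne_zero.mpr hp1.symm
  field_simp
  ring

lemma convexOn_meanWaitingTime {p : ℝ} (hp0 : 0 < p) (hp1 : p < 1) :
    ConvexOn ℝ (Ioi p) fun c : ℝ =>
      ((1 - c) / (1 - p)) * ((2 * p - c) * (1 - p) / (2 * p * (c - p)) + 1 / (2 * c)) := by
  have hpole : ConvexOn ℝ (Ioi p) fun c : ℝ => (1 - p) / 2 * (c - p)⁻¹ :=
    (convexOn_inv_sub p).smul (by linarith)
  have hinv : ConvexOn ℝ (Ioi p) fun c : ℝ => 1 / (2 * (1 - p)) * c⁻¹ :=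
    (convexOn_inv_Ioi hp0.le).smul (by have := sub_pos.mpr hp1; positivity)
  have haffine : ConvexOn ℝ (Ioi p) fun c : ℝ =>
      c / (2 * p) - ((p + 1) / (2 * p) + 1 / (2 * (1 - p))) :=
    (((convexOn_id (convex_Ioi p)).smul (by positivity : (0 : ℝ) ≤ (2 * p)⁻¹)).add_const
      (-((p + 1) / (2 * p) + 1 / (2 * (1 - p))))).congr fun c _ => by
        simp only [Pi.add_apply, id, smul_eq_mul]; ring
  refine ((hpole.add hinv).add haffine).congr fun c (hc : p < c) => ?_
  exact (meanWaitingTime_eq_partialFractions hp0.ne' hp1.ne (by linarith) hc.ne').symm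

/-- For fixed `0 < p < 1`, the mean waiting time
`c ↦ ((1-c)/(1-p)) * ((2p-c)(1-p)/(2p(c-p)) + 1/(2c))` (valid in the region
`p < c < 2p`, where the residual-queue term is positive) is convex on the open
interval `(p, min {2p, 1})`. -/
theorem stmt_8 (p : ℝ) (hp0 : 0 < p) (hp1 : p < 1) :
    ConvexOn ℝ (Set.Ioo p (min (2 * p) 1))
      (fun c : ℝ => ((1 - c) / (1 - p)) *
        ((2 * p - c) * (1 - p) / (2 * p * (c - p)) + 1 / (2 * c))) :=
  (convexOn_meanWaitingTime hp0 hp1).subset Ioo_subset_Ioi_self (convex_Ioo _ _)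
end
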